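/- arXiv:2212.02604 — 6 statements merged into one kernel-verified Lean document; each statement's English description precedes it below -/
import Mathlib

section
/- Let E, A be real n×n matrices. Let S be a real matrix whose columns form an orthonormal basis of the (right) nullspace ker(E), and let T be a real matrix whose columns form an orthonormal basis of the left nullspace ker(Eᵀ). Then the stacked matrix [E ; TᵀA] (E on top of TᵀA) has rank n if and only if the matrix TᵀAS is square and nonsingular. (Equivalence of conditions 2 and 4 of Lemma 1.) -/
/-!
Writing `ker E = range S` with `S` injective, a vector in the kernel of `[E ; TᵀA]` is `S y`
with `TᵀA S y = 0`, so the stacked matrix has full column rank iff `TᵀAS` is injective.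
Since `rank E = rank Eᵀ`, the kernels of `E` and `Eᵀ` have the same dimension, so `TᵀAS` is
square and injectivity is bijectivity.
-/

open Matrix

theorem LinearMap.ker_inf_eq_bot_iff_injective_comp {R M N P Q : Type*} [Ring R]
    [AddCommGroup M] [AddCommGroup N] [AddCommGroup P] [AddCommGroup Q]
    [Module R M] [Module R N] [Module R P] [Module R Q]
    {f : M →ₗ[R] N} {g : M →ₗ[R] P} {s : Q →ₗ[R] M}
    (hs : Function.Injective s) (hsf : LinearMap.range s = LinearMap.ker f) :
    LinearMap.ker f ⊓ LinearMap.ker g = ⊥ ↔ Function.Injective (g ∘ₗ s) := by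
  rw [← LinearMap.ker_eq_bot, LinearMap.ker_comp, ← hsf, ← Submodule.map_comap_eq,
    ← Submodule.map_bot s, (Submodule.map_injective_of_injective hs).eq_iff]

namespace Matrix

variable {R K : Type*} [CommRing R] [Field K] {m₁ m₂ n k : Type*} [Fintype n]

theorem mulVecLin_injective_of_mul_eq_one [Fintype k] [DecidableEq k] {B : Matrix k n R}
    {S : Matrix n k R} (h : B * S = 1) : Function.Injective S.mulVecLin :=
  Function.LeftInverse.injective (g := B.mulVecLin) fun x => by
    simp [mulVec_mulVec, h]

theorem ker_mulVecLin_fromRows (A₁ : Matrix m₁ n R) (A₂ : Matrix m₂ n R) :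
    LinearMap.ker (fromRows A₁ A₂).mulVecLin =
      LinearMap.ker A₁.mulVecLin ⊓ LinearMap.ker A₂.mulVecLin := by
  ext v
  simp [fromRows_mulVec, ← Sum.elim_zero_zero, Sum.elim_eq_iff]

theorem rank_add_finrank_ker_mulVecLin (M : Matrix m₁ n K) :
    M.rank + Module.finrank K (LinearMap.ker M.mulVecLin) = Fintype.card n :=
  M.mulVecLin.finrank_range_add_finrank_ker.trans (Module.finrank_fintype_fun_eq_card K)

theorem rank_eq_card_iff_ker_mulVecLin_eq_bot (M : Matrix m₁ n K) :
    M.rank = Fintype.card n ↔ LinearMap.ker M.mulVecLin = ⊥ := by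
  have := M.rank_add_finrank_ker_mulVecLin
  rw [← Submodule.finrank_eq_zero]
  omega

theorem finrank_ker_mulVecLin_transpose (M : Matrix n n K) :
    Module.finrank K (LinearMap.ker Mᵀ.mulVecLin) =
      Module.finrank K (LinearMap.ker M.mulVecLin) := by
  have h := M.rank_add_finrank_ker_mulVecLin
  have hT := Mᵀ.rank_add_finrank_ker_mulVecLin
  rw [rank_transpose] at hT
  omega

end Matrix

/-- Equivalence of conditions 2 and 4 of Lemma 1: the stacked matrix `[E ; TᵀA]`
has rank `n` if and only if `TᵀAS` is square and nonsingular (expressed as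
bijectivity of the associated linear map), where the columns of `S` form an
orthonormal basis of `ker E` and the columns of `T` form an orthonormal basis
of `ker Eᵀ`. -/
theorem stacked_rank_eq_iff_bijective
    (n k k' : ℕ) (E A : Matrix (Fin n) (Fin n) ℝ)
    (S : Matrix (Fin n) (Fin k) ℝ) (T : Matrix (Fin n) (Fin k') ℝ)
    (hS1 : Sᵀ * S = 1)
    (hS2 : LinearMap.range S.mulVecLin = LinearMap.ker E.mulVecLin)
    (hT1 : Tᵀ * T = 1)
    (hT2 : LinearMap.range T.mulVecLin = LinearMap.ker Eᵀ.mulVecLin) :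
    (Matrix.fromRows E (Tᵀ * A)).rank = n ↔
      Function.Bijective (Matrix.mulVecLin (Tᵀ * A * S)) := by
  have hS := mulVecLin_injective_of_mul_eq_one hS1
  have hT := mulVecLin_injective_of_mul_eq_one hT1
  obtain rfl : k' = k := by
    have h := finrank_ker_mulVecLin_transpose E
    rwa [← hS2, ← hT2, LinearMap.finrank_range_of_inj hS, LinearMap.finrank_range_of_inj hT,
      Module.finrank_fin_fun, Module.finrank_fin_fun] at h
  have hrank := rank_eq_card_iff_ker_mulVecLin_eq_bot (fromRows E (Tᵀ * A))
  rw [Fintype.card_fin] at hrank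
  rw [hrank, ker_mulVecLin_fromRows, LinearMap.ker_inf_eq_bot_iff_injective_comp hS hS2,
    ← mulVecLin_mul]
  exact ⟨fun h => ⟨h, LinearMap.injective_iff_surjective.mp h⟩, And.left⟩
end

section
/- Let E, A be real n×n matrices and let S be a real matrix whose columns form an orthonormal basis of the right nullspace ker(E). Then the rank of the matrix [E, AS] (columns of E followed by columns of AS) equals the rank of the n×n matrix E + A S Sᵀ. (Rank identity inside condition 3 of Lemma 1.) -/
open Matrix

/-!
Write `B = A S` and `T = Sᵀ`, so that `T S = 1` and `E S = 0`. Then `N = E + B T` and `[E, B]`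
factor through each other: `N = [E, B] [1; T]` and `[E, B] = N [1 - S T, S]`, so each rank
bounds the other.
-/

section

variable {R m n k : Type*} [Fintype n] [Fintype k]

theorem Matrix.mul_eq_zero_of_range_le_ker [CommSemiring R] {E : Matrix m n R}
    {S : Matrix n k R} (h : LinearMap.range S.mulVecLin ≤ LinearMap.ker E.mulVecLin) :
    E * S = 0 :=
  mulVec_injective <| funext fun v => by
    rw [← mulVec_mulVec, zero_mulVec]
    exact h ⟨v, rfl⟩

theorem Matrix.add_mul_eq_fromCols_mul_fromRows [Semiring R] [DecidableEq n]
    (E : Matrix m n R) (B : Matrix m k R) (T : Matrix k n R) :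
    E + B * T = fromCols E B * fromRows 1 T :=
  (Matrix.mul_one E ▸ Matrix.fromCols_mul_fromRows E B 1 T).symm

theorem Matrix.fromCols_eq_add_mul_mul_fromCols [Ring R] [DecidableEq n] [DecidableEq k]
    {E : Matrix m n R} {S : Matrix n k R} {T : Matrix k n R} (hES : E * S = 0)
    (hTS : T * S = 1) (B : Matrix m k R) :
    fromCols E B = (E + B * T) * fromCols (1 - S * T) S := by
  have hE : (E + B * T) * (1 - S * T) = E := by
    rw [Matrix.mul_sub, Matrix.mul_one, Matrix.add_mul, ← Matrix.mul_assoc, hES, Matrix.zero_mul,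
      Matrix.mul_assoc B, ← Matrix.mul_assoc T, hTS, Matrix.one_mul, zero_add, add_sub_cancel_right]
  have hB : (E + B * T) * S = B := by
    rw [Matrix.add_mul, hES, zero_add, Matrix.mul_assoc, hTS, Matrix.mul_one]
  rw [Matrix.mul_fromCols, hE, hB]

theorem Matrix.rank_fromCols_eq_rank_add_mul [CommRing R] [StrongRankCondition R]
    [DecidableEq n] [DecidableEq k] {E : Matrix m n R} {S : Matrix n k R} {T : Matrix k n R}
    (hES : E * S = 0) (hTS : T * S = 1) (B : Matrix m k R) :
    (fromCols E B).rank = (E + B * T).rank := by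
  apply le_antisymm
  · rw [fromCols_eq_add_mul_mul_fromCols hES hTS B]
    exact rank_mul_le_left _ _
  · rw [add_mul_eq_fromCols_mul_fromRows]
    exact rank_mul_le_left _ _

end

/-- Rank identity inside condition 3 of Lemma 1:
`rank [E, AS] = rank (E + A S Sᵀ)`, where the columns of `S` form an
orthonormal basis of the right nullspace `ker E`. -/
theorem rank_columns_eq_rank_add_proj
    (n k : ℕ) (E A : Matrix (Fin n) (Fin n) ℝ)
    (S : Matrix (Fin n) (Fin k) ℝ)
    (hS1 : Sᵀ * S = 1)
    (hS2 : LinearMap.range S.mulVecLin = LinearMap.ker E.mulVecLin) :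
    (Matrix.fromCols E (A * S)).rank = (E + A * S * Sᵀ).rank :=
  rank_fromCols_eq_rank_add_mul (mul_eq_zero_of_range_le_ker hS2.le) hS1 (A * S)
end

section
/- Let N be a real n×n matrix with N^ν = 0 for some positive integer ν, let g : ℝ → ℝⁿ be infinitely differentiable, and let z : ℝ → ℝⁿ be infinitely differentiable and satisfy N·z'(t) = z(t) + g(t) for all t ∈ ℝ. Then z(t) = − Σ_{i=0}^{ν−1} Nⁱ · g⁽ⁱ⁾(t) for all t ∈ ℝ, where g⁽ⁱ⁾ denotes the i-th derivative of g. In particular the solution of the nilpotent part of a descriptor system is unique and determined pointwise by g and its derivatives. -/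
open Matrix

/-- The nilpotent part of a descriptor system in Weierstraß canonical form:
if `N^ν = 0` and `N ż = z + g` with `z`, `g` smooth, then
`z(t) = − Σ_{i=0}^{ν−1} Nⁱ g⁽ⁱ⁾(t)` for all `t`. -/
theorem nilpotent_part_solution
    (n ν : ℕ) (hν : 0 < ν)
    (N : Matrix (Fin n) (Fin n) ℝ) (hN : N ^ ν = 0)
    (g z : ℝ → (Fin n → ℝ))
    (hg : ContDiff ℝ (⊤ : ℕ∞) g) (hz : ContDiff ℝ (⊤ : ℕ∞) z)
    (hode : ∀ t : ℝ, N.mulVec (deriv z t) = z t + g t) :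
    ∀ t : ℝ, z t = -∑ i ∈ Finset.range ν, (N ^ i).mulVec (iteratedDeriv i g t) := by
  -- continuous linear map given by N
  set L : (Fin n → ℝ) →L[ℝ] (Fin n → ℝ) := N.mulVecLin.toContinuousLinearMap with hL
  have hLapp : ∀ v, L v = N.mulVec v := fun v => rfl
  -- differentiated ODE: N z⁽ᵏ⁺¹⁾ = z⁽ᵏ⁾ + g⁽ᵏ⁾
  have key : ∀ k : ℕ, ∀ t : ℝ,
      N.mulVec (iteratedDeriv (k + 1) z t) = iteratedDeriv k z t + iteratedDeriv k g t := by
    intro k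
    induction k with
    | zero =>
      intro t
      simpa [iteratedDeriv_succ, iteratedDeriv_zero] using hode t
    | succ k ih =>
      intro t
      have hzd : Differentiable ℝ (iteratedDeriv (k + 1) z) :=
        hz.differentiable_iteratedDeriv (k + 1) (by exact_mod_cast ENat.coe_lt_top (k + 1))
      have hgd : Differentiable ℝ (iteratedDeriv k g) :=
        hg.differentiable_iteratedDeriv k (by exact_mod_cast ENat.coe_lt_top k)
      have hzk : HasDerivAt (iteratedDeriv (k + 1) z) (iteratedDeriv (k + 2) z t) t := by
        have := (hzd t).hasDerivAt
        rwa [← iteratedDeriv_succ] at this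
      have hleft : HasDerivAt (fun s => N.mulVec (iteratedDeriv (k + 1) z s))
          (N.mulVec (iteratedDeriv (k + 2) z t)) t := by
        have := (L.hasFDerivAt (x := iteratedDeriv (k + 1) z t)).comp_hasDerivAt t hzk
        simpa [hLapp, Function.comp_def] using this
      have hzk1 : HasDerivAt (iteratedDeriv (k + 1) z) (iteratedDeriv (k + 2) z t) t := hzk
      have hzkd : HasDerivAt (iteratedDeriv k z) (iteratedDeriv (k + 1) z t) t := by
        have h := ((hz.differentiable_iteratedDeriv k
          (by exact_mod_cast ENat.coe_lt_top k)) t).hasDerivAt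
        rwa [← iteratedDeriv_succ] at h
      have hgkd : HasDerivAt (iteratedDeriv k g) (iteratedDeriv (k + 1) g t) t := by
        have h := (hgd t).hasDerivAt
        rwa [← iteratedDeriv_succ] at h
      have hright : HasDerivAt (fun s => iteratedDeriv k z s + iteratedDeriv k g s)
          (iteratedDeriv (k + 1) z t + iteratedDeriv (k + 1) g t) t := hzkd.add hgkd
      have heq : (fun s => N.mulVec (iteratedDeriv (k + 1) z s))
          = fun s => iteratedDeriv k z s + iteratedDeriv k g s := funext fun s => ih s
      rw [heq] at hleft
      exact hleft.unique hright
  -- main induction: z = Nᵏ z⁽ᵏ⁾ − Σ_{i<k} Nⁱ g⁽ⁱ⁾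
  have main : ∀ k : ℕ, ∀ t : ℝ,
      z t = (N ^ k).mulVec (iteratedDeriv k z t)
        - ∑ i ∈ Finset.range k, (N ^ i).mulVec (iteratedDeriv i g t) := by
    intro k
    induction k with
    | zero => intro t; simp
    | succ k ih =>
      intro t
      have hk : iteratedDeriv k z t = N.mulVec (iteratedDeriv (k + 1) z t) - iteratedDeriv k g t := by
        rw [key k t]; abel
      rw [ih t, hk, Matrix.mulVec_sub, Matrix.mulVec_mulVec, ← pow_succ,
        Finset.sum_range_succ]
      abel
  intro t
  have := main ν t
  rw [hN, Matrix.zero_mulVec, zero_sub] at this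
  exact this
end

section
/- Let E, A be real n×n matrices and C a real p×n matrix. Then the following are equivalent: (i) condition O0: for every pair (α, β) ∈ ℂ² with (α, β) ≠ (0,0), the (n+p)×n complex matrix obtained by stacking αE − βA on top of C has rank n; (ii) condition O1 together with rank [E ; C] = n, i.e., for every λ ∈ ℂ the stacked matrix [λE − A ; C] has rank n, and the stacked real matrix [E ; C] has rank n. -/
/-!
Condition O0 at `(α, β) = (λ, 1)` is O1, and at `(1, 0)` it is the rank condition on `[E ; C]`,
whose rank does not change under complexification because the real and imaginary parts of a
complex kernel vector are real kernel vectors. Conversely, every `(α, β) ≠ (0, 0)` is a nonzero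
multiple of `(λ, 1)` or of `(1, 0)`, and scaling the top block of a stacked matrix by a nonzero
scalar leaves its kernel, hence its rank, unchanged.
-/

open Matrix

namespace Matrix

variable {K m m' n : Type*} [Fintype n]

theorem fromRows_mulVec_eq_zero_iff {R : Type*} [Semiring R] (B : Matrix m n R)
    (C : Matrix m' n R) (x : n → R) :
    fromRows B C *ᵥ x = 0 ↔ B *ᵥ x = 0 ∧ C *ᵥ x = 0 := by
  rw [fromRows_mulVec, ← Sum.elim_zero_zero, Sum.elim_eq_iff]

section Field

variable [Field K]

theorem rank_eq_card_iff_ker_eq_bot (A : Matrix m n K) :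
    A.rank = Fintype.card n ↔ LinearMap.ker A.mulVecLin = ⊥ := by
  have h := LinearMap.finrank_range_add_finrank_ker A.mulVecLin
  rw [Module.finrank_fintype_fun_eq_card] at h
  rw [rank, ← Submodule.finrank_eq_zero]
  omega

theorem rank_eq_rank_of_ker_eq {A : Matrix m n K} {B : Matrix m' n K}
    (h : LinearMap.ker A.mulVecLin = LinearMap.ker B.mulVecLin) : A.rank = B.rank := by
  have hA := LinearMap.finrank_range_add_finrank_ker A.mulVecLin
  have hB := LinearMap.finrank_range_add_finrank_ker B.mulVecLin
  rw [h] at hA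
  rw [rank, rank]
  omega

theorem rank_fromRows_smul_left {c : K} (hc : c ≠ 0) (B : Matrix m n K) (C : Matrix m' n K) :
    (fromRows (c • B) C).rank = (fromRows B C).rank := by
  refine rank_eq_rank_of_ker_eq (Submodule.ext fun x => ?_)
  simp only [LinearMap.mem_ker, mulVecLin_apply, fromRows_mulVec_eq_zero_iff, smul_mulVec,
    smul_eq_zero, hc, false_or]

end Field

theorem re_map_ofReal_mulVec (M : Matrix m n ℝ) (x : n → ℂ) (i : m) :
    ((M.map Complex.ofReal *ᵥ x) i).re = (M *ᵥ fun j => (x j).re) i := by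
  simp [mulVec, dotProduct, Complex.re_sum]

theorem im_map_ofReal_mulVec (M : Matrix m n ℝ) (x : n → ℂ) (i : m) :
    ((M.map Complex.ofReal *ᵥ x) i).im = (M *ᵥ fun j => (x j).im) i := by
  simp [mulVec, dotProduct, Complex.im_sum]

theorem rank_map_ofReal_eq_card_iff (M : Matrix m n ℝ) :
    (M.map Complex.ofReal).rank = Fintype.card n ↔ M.rank = Fintype.card n := by
  simp only [rank_eq_card_iff_ker_eq_bot, LinearMap.ker_eq_bot', mulVecLin_apply]
  constructor
  · intro h x hx
    have hx' : M.map Complex.ofReal *ᵥ (Complex.ofReal ∘ x) = 0 := funext fun i =>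
      (RingHom.map_mulVec Complex.ofRealHom M x i).symm.trans (by simp [hx])
    exact funext fun j => Complex.ofReal_injective (congrFun (h _ hx') j)
  · intro h x hx
    have hre := congrFun (h _ (funext fun i => by rw [← re_map_ofReal_mulVec, hx]; rfl))
    have him := congrFun (h _ (funext fun i => by rw [← im_map_ofReal_mulVec, hx]; rfl))
    exact funext fun j => Complex.ext (hre j) (him j)

end Matrix

/-- Condition O0 holds if and only if condition O1 holds together with
`rank [E ; C] = n`. Ranks of complex combinations are taken over `ℂ`. -/
theorem O0_iff_O1_and_rank
    (n p : ℕ) (E A : Matrix (Fin n) (Fin n) ℝ) (C : Matrix (Fin p) (Fin n) ℝ) :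
    (∀ α β : ℂ, (α, β) ≠ (0, 0) →
        (Matrix.fromRows (α • E.map Complex.ofReal - β • A.map Complex.ofReal)
          (C.map Complex.ofReal)).rank = n) ↔
      ((∀ lam : ℂ,
          (Matrix.fromRows (lam • E.map Complex.ofReal - A.map Complex.ofReal)
            (C.map Complex.ofReal)).rank = n) ∧
        (Matrix.fromRows E C).rank = n) := by
  have hEC : (fromRows E C).rank = n ↔
      (fromRows (E.map Complex.ofReal) (C.map Complex.ofReal)).rank = n := by
    simpa [fromRows_map] using (rank_map_ofReal_eq_card_iff (fromRows E C)).symm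
  rw [hEC]
  constructor
  · intro hO0
    exact ⟨fun lam => by simpa using hO0 lam 1 (by simp), by simpa using hO0 1 0 (by simp)⟩
  · rintro ⟨hO1, hE⟩ α β hαβ
    by_cases hβ : β = 0
    · have hα : α ≠ 0 := by rintro rfl; exact hαβ (by rw [hβ])
      rwa [hβ, zero_smul, sub_zero, rank_fromRows_smul_left hα]
    · have hpencil : α • E.map Complex.ofReal - β • A.map Complex.ofReal =
          β • ((α / β) • E.map Complex.ofReal - A.map Complex.ofReal) := by
        rw [smul_sub, smul_smul, mul_div_cancel₀ α hβ]
      rw [hpencil, rank_fromRows_smul_left hβ]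
      exact hO1 (α / β)
end

section
/- Let d, a, m₁, m₂, p₁, p₂ be nonnegative integers and let E₁₁, A₁₁ ∈ ℝ^{d×d}, A₂₂ ∈ ℝ^{a×a} with A₂₂ nonsingular, B₁₁ ∈ ℝ^{d×m₁}, B₁₂ ∈ ℝ^{d×m₂}, B₂₁ ∈ ℝ^{a×m₁}, C₁₁ ∈ ℝ^{p₁×d}, C₁₂ ∈ ℝ^{p₁×a}, C₂₁ ∈ ℝ^{p₂×d}. Set E = [[E₁₁, 0], [0, 0]], A = [[A₁₁, 0], [0, A₂₂]], B = [[B₁₁, B₁₂], [B₂₁, 0]], C = [[C₁₁, C₁₂], [C₂₁, 0]] in block form. Then for every s ∈ ℝ such that sE₁₁ − A₁₁ is nonsingular, the matrix sE − A is nonsingular and C(sE − A)^{-1}B = [C₁₁ ; C₂₁]·(sE₁₁ − A₁₁)^{-1}·[B₁₁, B₁₂] + D, where D is the (p₁+p₂)×(m₁+m₂) block matrix [[−C₁₂A₂₂^{-1}B₂₁, 0], [0, 0]]. Hence the transfer function of (E, A, B, C) equals that of the reduced realization (E₁₁, A₁₁, [B₁₁, B₁₂], [C₁₁ ; C₂₁],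 −C₁₂A₂₂^{-1}B₂₁) in its (1,1) block sense. -/
/-!
Because `E` has a zero second diagonal block, the pencil `sE - A` is block diagonal with blocks
`sE₁₁ - A₁₁` and `-A₂₂`, so its inverse is block diagonal as well. Sandwiching it between the
zero-padded `C` and `B`, the first block yields the reduced transfer function and the second
contributes only the feedthrough term `-C₁₂ A₂₂⁻¹ B₂₁` in the `(1,1)` block.
-/

open Matrix

namespace Matrix

variable {R l m n o p q r t : Type*}

theorem inv_neg [Fintype n] [DecidableEq n] [CommRing R] (A : Matrix n n R) : (-A)⁻¹ = -A⁻¹ := by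
  by_cases hA : IsUnit A
  · exact inv_eq_left_inv <| by
      rw [neg_mul_neg, nonsing_inv_mul _ ((isUnit_iff_isUnit_det A).mp hA)]
  · rw [nonsing_inv_eq_ringInverse, nonsing_inv_eq_ringInverse, Ring.inverse_non_unit _ hA,
      Ring.inverse_non_unit _ (IsUnit.neg_iff A |>.not.mpr hA), neg_zero]

theorem inv_fromBlocks_zero_zero [Fintype m] [DecidableEq m] [Fintype n] [DecidableEq n]
    [CommRing R] (A : Matrix m m R) (D : Matrix n n R) (hAD : IsUnit A ↔ IsUnit D) :
    (fromBlocks A 0 0 D)⁻¹ = fromBlocks A⁻¹ 0 0 D⁻¹ := by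
  simp [inv_fromBlocks_zero₂₁_of_isUnit_iff A 0 D hAD]

theorem smul_fromBlocks_sub_fromBlocks [Ring R] (s : R) (E A : Matrix m m R) (D : Matrix n n R) :
    s • fromBlocks E 0 0 0 - fromBlocks A 0 0 D = fromBlocks (s • E - A) 0 0 (-D) := by
  simp only [fromBlocks_smul, sub_eq_add_neg, fromBlocks_neg, fromBlocks_add, smul_zero, neg_zero,
    add_zero, zero_add]

theorem fromBlocks_mul_fromBlocks_zero_zero_mul_fromBlocks [Fintype l] [Fintype m] [Fintype o]
    [Fintype q] [Semiring R]
    (C₁₁ : Matrix p l R) (C₁₂ : Matrix p m R) (C₂₁ : Matrix r l R)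
    (P : Matrix l o R) (Q : Matrix m q R)
    (B₁₁ : Matrix o t R) (B₁₂ : Matrix o n R) (B₂₁ : Matrix q t R) :
    fromBlocks C₁₁ C₁₂ C₂₁ 0 * fromBlocks P 0 0 Q * fromBlocks B₁₁ B₁₂ B₂₁ 0 =
      fromRows C₁₁ C₂₁ * P * fromCols B₁₁ B₁₂ + fromBlocks (C₁₂ * Q * B₂₁) 0 0 0 := by
  rw [fromBlocks_multiply, fromBlocks_multiply, fromRows_mul, fromRows_mul_fromCols,
    fromBlocks_add]
  simp [Matrix.mul_assoc]

end Matrix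

/-- The transfer function of the regularized block system
`E = [[E₁₁,0],[0,0]]`, `A = [[A₁₁,0],[0,A₂₂]]`, `B = [[B₁₁,B₁₂],[B₂₁,0]]`,
`C = [[C₁₁,C₁₂],[C₂₁,0]]` equals that of the reduced realization
`(E₁₁, A₁₁, [B₁₁, B₁₂], [C₁₁ ; C₂₁], −C₁₂A₂₂⁻¹B₂₁)` placed in the `(1,1)` block. -/
theorem transfer_function_reduction
    (d a m₁ m₂ p₁ p₂ : ℕ)
    (E₁₁ A₁₁ : Matrix (Fin d) (Fin d) ℝ)
    (A₂₂ : Matrix (Fin a) (Fin a) ℝ) (hA₂₂ : IsUnit A₂₂)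
    (B₁₁ : Matrix (Fin d) (Fin m₁) ℝ) (B₁₂ : Matrix (Fin d) (Fin m₂) ℝ)
    (B₂₁ : Matrix (Fin a) (Fin m₁) ℝ)
    (C₁₁ : Matrix (Fin p₁) (Fin d) ℝ) (C₁₂ : Matrix (Fin p₁) (Fin a) ℝ)
    (C₂₁ : Matrix (Fin p₂) (Fin d) ℝ) :
    ∀ s : ℝ, IsUnit (s • E₁₁ - A₁₁) →
      IsUnit (s • (Matrix.fromBlocks E₁₁ 0 0 0) - Matrix.fromBlocks A₁₁ 0 0 A₂₂) ∧
      (Matrix.fromBlocks C₁₁ C₁₂ C₂₁ 0) *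
          (s • (Matrix.fromBlocks E₁₁ 0 0 0) - Matrix.fromBlocks A₁₁ 0 0 A₂₂)⁻¹ *
          (Matrix.fromBlocks B₁₁ B₁₂ B₂₁ 0) =
        (Matrix.fromRows C₁₁ C₂₁) * (s • E₁₁ - A₁₁)⁻¹ * (Matrix.fromCols B₁₁ B₁₂) +
          Matrix.fromBlocks (-(C₁₂ * A₂₂⁻¹ * B₂₁)) 0 0 0 := by
  intro s hX
  have hneg : IsUnit (-A₂₂) := hA₂₂.neg
  rw [smul_fromBlocks_sub_fromBlocks]
  refine ⟨isUnit_fromBlocks_zero₂₁.mpr ⟨hX, hneg⟩, ?_⟩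
  rw [inv_fromBlocks_zero_zero _ _ (iff_of_true hX hneg),
    fromBlocks_mul_fromBlocks_zero_zero_mul_fromBlocks, Matrix.inv_neg, Matrix.mul_neg,
    Matrix.neg_mul]
end

section
/- Let Σ be a nonsingular real r×r matrix and let E be the n×n real matrix with block form E = [[Σ, 0], [0, 0]]. Let A ∈ ℝ^{n×n} be partitioned conformably as A = [[A₁₁, A₁₂], [A₂₁, A₂₂]] with A₂₂ of size (n−r)×(n−r), and let p(s) = det(sE − A) ∈ ℝ[s]. Then the following are equivalent: (i) p is not the zero polynomial and deg p = r; (ii) A₂₂ is nonsingular. (This is the regularity-and-index-at-most-one criterion of item 1 of Corollary 2, applied with E in the condensed form of Theorem 3.1, where it reads: the pencil is regular and of index at most one if and only if s₆ = t₆ = 0 and A₂₂ is nonsingular.) -/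
/-!
Scaling the last `q` rows of `sE − A` by `s` turns it into the pencil
`s·[[Σ, 0], [−A₂₁, −A₂₂]] + [[−A₁₁, −A₁₂], [0, 0]]`, whose determinant has degree at most `r + q`
with coefficient `det Σ · det(−A₂₂)` at `s^(r+q)`. Dividing by `s^q`, `p` has degree at most `r`
and its coefficient at `s^r` is `det Σ · det(−A₂₂)`, which is nonzero exactly when `A₂₂` is
nonsingular.
-/

open Matrix Polynomial

namespace Polynomial

theorem ne_zero_and_natDegree_eq_iff_coeff_ne_zero {R : Type*} [Semiring R] {p : R[X]} {n : ℕ}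
    (hp : p.natDegree ≤ n) : p ≠ 0 ∧ p.natDegree = n ↔ p.coeff n ≠ 0 := by
  constructor
  · rintro ⟨hp0, rfl⟩
    exact leadingCoeff_ne_zero.mpr hp0
  · intro hc
    exact ⟨ne_of_apply_ne (coeff · n) (by simpa using hc),
      natDegree_eq_of_le_of_coeff_ne_zero hp hc⟩

end Polynomial

namespace Matrix

variable {R ι m n : Type*} [CommRing R]

noncomputable def pencil (E A : Matrix ι ι R) : Matrix ι ι R[X] :=
  (X : R[X]) • E.map C - A.map C

variable [Fintype m] [Fintype n] [DecidableEq m] [DecidableEq n]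
  (Sig A₁₁ : Matrix m m R) (A₁₂ : Matrix m n R) (A₂₁ : Matrix n m R) (A₂₂ : Matrix n n R)

theorem diagonal_mul_pencil_fromBlocks :
    diagonal (Sum.elim (fun _ => 1) (fun _ => X)) *
        pencil (fromBlocks Sig 0 0 0) (fromBlocks A₁₁ A₁₂ A₂₁ A₂₂) =
      (X : R[X]) • (fromBlocks Sig 0 (-A₂₁) (-A₂₂)).map C +
        (fromBlocks (-A₁₁) (-A₁₂) 0 0).map C := by
  ext (i | i) (j | j) : 1 <;> simp [pencil, diagonal_mul, sub_eq_add_neg]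

theorem X_pow_mul_det_pencil_fromBlocks :
    X ^ Fintype.card n * (pencil (fromBlocks Sig 0 0 0) (fromBlocks A₁₁ A₁₂ A₂₁ A₂₂)).det =
      ((X : R[X]) • (fromBlocks Sig 0 (-A₂₁) (-A₂₂)).map C +
        (fromBlocks (-A₁₁) (-A₁₂) 0 0).map C).det := by
  rw [← diagonal_mul_pencil_fromBlocks, det_mul, det_diagonal, Fintype.prod_sum_type]
  simp

theorem natDegree_det_pencil_fromBlocks_le :
    (pencil (fromBlocks Sig 0 0 0) (fromBlocks A₁₁ A₁₂ A₂₁ A₂₂)).det.natDegree ≤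
      Fintype.card m := by
  rw [natDegree_le_iff_coeff_eq_zero]
  intro k hk
  have h := natDegree_det_X_add_C_le (fromBlocks Sig 0 (-A₂₁) (-A₂₂))
    (fromBlocks (-A₁₁) (-A₁₂) 0 0)
  rw [← X_pow_mul_det_pencil_fromBlocks, Fintype.card_sum] at h
  rw [← coeff_X_pow_mul _ (Fintype.card n)]
  exact coeff_eq_zero_of_natDegree_lt (by omega)

theorem coeff_det_pencil_fromBlocks :
    (pencil (fromBlocks Sig 0 0 0) (fromBlocks A₁₁ A₁₂ A₂₁ A₂₂)).det.coeff (Fintype.card m) =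
      Sig.det * (-A₂₂).det := by
  have h := coeff_det_X_add_C_card (fromBlocks Sig 0 (-A₂₁) (-A₂₂))
    (fromBlocks (-A₁₁) (-A₁₂) 0 0)
  rwa [← X_pow_mul_det_pencil_fromBlocks, Fintype.card_sum, coeff_X_pow_mul,
    det_fromBlocks_zero₁₂] at h

end Matrix

/-- Regularity-and-index-at-most-one criterion (item 1 of Corollary 2 in condensed
form): for `E = [[Σ, 0], [0, 0]]` with `Σ` nonsingular `r×r` and a conformable
`A = [[A₁₁, A₁₂], [A₂₁, A₂₂]]`, the pencil polynomial `p(s) = det(sE − A)` is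
nonzero of degree `r` if and only if `A₂₂` is nonsingular. -/
theorem condensed_pencil_regular_index_one_iff
    (r q : ℕ) (Sig : Matrix (Fin r) (Fin r) ℝ) (hSig : IsUnit Sig)
    (A₁₁ : Matrix (Fin r) (Fin r) ℝ) (A₁₂ : Matrix (Fin r) (Fin q) ℝ)
    (A₂₁ : Matrix (Fin q) (Fin r) ℝ) (A₂₂ : Matrix (Fin q) (Fin q) ℝ) :
    (Matrix.det ((Polynomial.X : ℝ[X]) •
          (Matrix.fromBlocks Sig 0 0 0 : Matrix (Fin r ⊕ Fin q) (Fin r ⊕ Fin q) ℝ).map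
            Polynomial.C -
        (Matrix.fromBlocks A₁₁ A₁₂ A₂₁ A₂₂).map Polynomial.C) ≠ 0 ∧
      (Matrix.det ((Polynomial.X : ℝ[X]) •
          (Matrix.fromBlocks Sig 0 0 0 : Matrix (Fin r ⊕ Fin q) (Fin r ⊕ Fin q) ℝ).map
            Polynomial.C -
        (Matrix.fromBlocks A₁₁ A₁₂ A₂₁ A₂₂).map Polynomial.C)).natDegree = r) ↔
      IsUnit A₂₂ := by
  have hdeg := natDegree_det_pencil_fromBlocks_le Sig A₁₁ A₁₂ A₂₁ A₂₂
  have hcoeff := coeff_det_pencil_fromBlocks Sig A₁₁ A₁₂ A₂₁ A₂₂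
  rw [Fintype.card_fin] at hdeg hcoeff
  have hdetSig : Sig.det ≠ 0 := ((isUnit_iff_isUnit_det Sig).mp hSig).ne_zero
  rw [← pencil, ne_zero_and_natDegree_eq_iff_coeff_ne_zero hdeg, hcoeff, isUnit_iff_isUnit_det,
    isUnit_iff_ne_zero, det_neg, mul_ne_zero_iff, mul_ne_zero_iff]
  simp [hdetSig]
end
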